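/- arXiv:math/0703049 — 5 statements merged into one kernel-verified Lean document; each statement's English description precedes it below -/
import Mathlib

section
/- If K_5 is a subgraph of a finite simple graph G, then the complete bipartite graph K_{4,6} is a subgraph of G^(2). -/
open SimpleGraph Function

/-- For a simple graph `G` on `V`, the graph `G^(t)`:
vertices are pairs `(i, j)` with `(i, j) ~ (k, l)` iff `j ≠ l` and `j ~ l` in `G`. -/
def gpow {V : Type*} (ι : Type*) (G : SimpleGraph V) : SimpleGraph (ι × V) where
  Adj a b := G.Adj a.2 b.2
  symm := ⟨by intro _ _ h; exact G.adj_symm h⟩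
  loopless := ⟨by intro _ h; exact G.irrefl h⟩

/-! `K_{2,2,2,2,2} = K_5^(2)` sits inside `G^(2)`; splitting its five parts as `2 + 3` exhibits
`K_{2·2, 2·3} = K_{4,6}`. -/

namespace SimpleGraph

variable {ι α β V W : Type*}

variable (ι) in
theorem IsContained.gpow {G : SimpleGraph V} {H : SimpleGraph W} (h : G ⊑ H) :
    gpow ι G ⊑ gpow ι H :=
  let ⟨f⟩ := h
  ⟨Hom.toCopy ⟨Prod.map _root_.id f, fun hadj ↦ f.toHom.map_adj hadj⟩
    (injective_id.prodMap f.injective)⟩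

theorem completeBipartiteGraph_prod_le_comap_gpow :
    completeBipartiteGraph (ι × α) (ι × β) ≤
      (gpow ι (completeGraph (α ⊕ β))).comap (Equiv.prodSumDistrib ι α β).symm := by
  rintro (_ | _) (_ | _) <;> simp [gpow]

theorem completeBipartiteGraph_prod_isContained_gpow_completeGraph :
    completeBipartiteGraph (ι × α) (ι × β) ⊑ gpow ι (completeGraph (α ⊕ β)) :=
  (IsContained.of_le completeBipartiteGraph_prod_le_comap_gpow).trans
    ⟨(Embedding.comap (Equiv.prodSumDistrib ι α β).symm.toEmbedding _).toCopy⟩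

theorem completeBipartiteGraph_prod_isContained_gpow {G : SimpleGraph V}
    (h : completeGraph (α ⊕ β) ⊑ G) :
    completeBipartiteGraph (ι × α) (ι × β) ⊑ gpow ι G :=
  completeBipartiteGraph_prod_isContained_gpow_completeGraph.trans (h.gpow ι)

end SimpleGraph

theorem stmt_2_general {V : Type*} (G : SimpleGraph V)
    (h : ∃ f : completeGraph (Fin 5) →g G, Injective f) :
    ∃ g : completeBipartiteGraph (Fin 4) (Fin 6) →g gpow (Fin 2) G, Injective g := by
  obtain ⟨f, hf⟩ := h
  have hK5 : completeGraph (Fin 2 ⊕ Fin 3) ⊑ G :=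
    (Iso.completeGraph finSumFinEquiv).isContained.trans ⟨f.toCopy hf⟩
  have hK46 : completeBipartiteGraph (Fin 4) (Fin 6) ⊑ gpow (Fin 2) G :=
    (completeBipartiteGraphCongr (finProdFinEquiv : Fin 2 × Fin 2 ≃ Fin 4).symm
      (finProdFinEquiv : Fin 2 × Fin 3 ≃ Fin 6).symm).isContained.trans
      (completeBipartiteGraph_prod_isContained_gpow hK5)
  obtain ⟨g⟩ := hK46
  exact ⟨g.toHom, g.injective⟩

/-- If `K_5` is a subgraph of a finite simple graph `G`, then `K_{4,6}` is a
subgraph of `G^(2)`. -/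
theorem stmt_2 {V : Type*} [Fintype V] (G : SimpleGraph V)
    (h : ∃ f : completeGraph (Fin 5) →g G, Injective f) :
    ∃ g : completeBipartiteGraph (Fin 4) (Fin 6) →g gpow (Fin 2) G, Injective g :=
  stmt_2_general G h
end

section
/- Let R be a commutative ring and I an ideal of R. If {x_λ + I : λ ∈ Λ} is the set of nonzero zero-divisors of R/I, then the vertex set of the ideal-based zero-divisor graph Γ_I(R) equals {x_λ + a : λ ∈ Λ, a ∈ I}; consequently, when R is finite, |V(Γ_I(R))| = |I| · |V(Γ(R/I))|. -/
/-- The vertex set of the ideal-based zero-divisor graph `Γ_I(R)`. -/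
def zdvSet (R : Type*) [CommRing R] (I : Ideal R) : Set R :=
  {x | x ∉ I ∧ ∃ y, y ∉ I ∧ x * y ∈ I}

/-- The vertex set of the usual zero-divisor graph `Γ(S)` of a ring `S`:
the nonzero zero-divisors. -/
def zdSet (S : Type*) [CommRing S] : Set S :=
  {z | z ≠ 0 ∧ ∃ w, w ≠ 0 ∧ z * w = 0}

theorem zdv_eq (R : Type*) [CommRing R] (I : Ideal R) :
    zdvSet R I = {x : R | Ideal.Quotient.mk I x ∈ zdSet (R ⧸ I)} := by
  ext x
  simp only [zdvSet, zdSet, Set.mem_setOf_eq, ne_eq, Ideal.Quotient.eq_zero_iff_mem]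
  constructor
  · rintro ⟨hx, y, hy, hxy⟩
    refine ⟨hx, Ideal.Quotient.mk I y, ?_, ?_⟩
    · simpa [Ideal.Quotient.eq_zero_iff_mem] using hy
    · rw [← map_mul, Ideal.Quotient.eq_zero_iff_mem]; exact hxy
  · rintro ⟨hx, w, hw, hxw⟩
    obtain ⟨y, rfl⟩ := Ideal.Quotient.mk_surjective w
    refine ⟨hx, y, ?_, ?_⟩
    · simpa [Ideal.Quotient.eq_zero_iff_mem] using hw
    · rw [← Ideal.Quotient.eq_zero_iff_mem, map_mul]; exact hxw

/-- The vertex set of `Γ_I(R)` consists exactly of the elements lying over the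
nonzero zero-divisors of `R/I`; consequently, when `R` is finite,
`|V(Γ_I(R))| = |I| * |V(Γ(R/I))|`. -/
theorem stmt_3 (R : Type*) [CommRing R] (I : Ideal R) :
    zdvSet R I = {x : R | Ideal.Quotient.mk I x ∈ zdSet (R ⧸ I)} ∧
    (Finite R →
      Nat.card (zdvSet R I) = Nat.card I * Nat.card (zdSet (R ⧸ I))) := by
  refine ⟨zdv_eq R I, fun _ => ?_⟩
  obtain ⟨s, hs⟩ := (Ideal.Quotient.mk_surjective (I := I)).hasRightInverse
  have e : zdvSet R I ≃ I × zdSet (R ⧸ I) :=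
    { toFun := fun x => (⟨x.1 - s (Ideal.Quotient.mk I x.1), by
        rw [← Ideal.Quotient.eq_zero_iff_mem, map_sub, hs, sub_self]⟩,
        ⟨Ideal.Quotient.mk I x.1, (Set.ext_iff.1 (zdv_eq R I) x.1).1 x.2⟩)
      invFun := fun p => ⟨(p.1 : R) + s p.2, by
        rw [zdv_eq]
        show Ideal.Quotient.mk I _ ∈ zdSet (R ⧸ I)
        rw [map_add, hs, Ideal.Quotient.eq_zero_iff_mem.2 p.1.2, zero_add]
        exact p.2.2⟩
      left_inv := fun x => by
        ext; simp
      right_inv := fun p => by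
        have h1 : Ideal.Quotient.mk I ((p.1 : R) + s p.2) = p.2 := by
          rw [map_add, hs, Ideal.Quotient.eq_zero_iff_mem.2 p.1.2, zero_add]
        ext
        · simp [h1]
        · simp [h1] }
  rw [Nat.card_eq_of_bijective e e.bijective, Nat.card_prod]
end

section
/- Let R be a commutative ring and I an ideal of R with |I| = t finite. Then the graph Γ(R/I)^(t) is (isomorphic to) a subgraph of Γ_I(R): explicitly, if {x_1+I,...,x_m+I} are the nonzero zero-divisors of R/I and I = {a_1,...,a_t}, then V(Γ_I(R)) = {x_j + a_i : 1 ≤ i ≤ t, 1 ≤ j ≤ m}, and whenever j ≠ l with x_j x_l ∈ I, the vertices x_j + a_i and x_l + a_k are adjacent in Γ_I(R). -/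
/-- The ideal-based zero-divisor graph `Γ_I(R)` on its vertex set. -/
def GammaI (R : Type*) [CommRing R] (I : Ideal R) : SimpleGraph (zdvSet R I) where
  Adj x y := x ≠ y ∧ (x : R) * y ∈ I
  symm := by
    constructor; rintro x y ⟨h1, h2⟩
    exact ⟨fun e => h1 e.symm, by rwa [mul_comm]⟩
  loopless := by constructor; rintro x ⟨h1, _⟩; exact h1 rfl

theorem zdvSet_ker_eq_preimage_zdSet {R S : Type*} [CommRing R] [CommRing S] {f : R →+* S}
    (hf : Function.Surjective f) : zdvSet R (RingHom.ker f) = f ⁻¹' zdSet S := by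
  ext x
  simp only [zdvSet, zdSet, Set.mem_ofPred_eq, Set.mem_preimage, RingHom.mem_ker, map_mul]
  exact and_congr_right fun _ => (hf.exists (p := fun w => w ≠ 0 ∧ f x * w = 0)).symm

theorem zdvSet_eq_preimage_zdSet_quotient {R : Type*} [CommRing R] (I : Ideal R) :
    zdvSet R I = Ideal.Quotient.mk I ⁻¹' zdSet (R ⧸ I) := by
  simpa only [Ideal.mk_ker] using zdvSet_ker_eq_preimage_zdSet Ideal.Quotient.mk_surjective

theorem GammaI_adj_of_mk_ne {R : Type*} [CommRing R] {I : Ideal R} {x y : zdvSet R I}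
    (hne : Ideal.Quotient.mk I (x : R) ≠ Ideal.Quotient.mk I (y : R)) (hxy : (x : R) * y ∈ I) :
    (GammaI R I).Adj x y :=
  ⟨fun h => hne (congrArg _ (congrArg Subtype.val h)), hxy⟩

/-- `Γ(R/I)^(t)` is a subgraph of `Γ_I(R)`: the vertex set of `Γ_I(R)` consists of the
elements lying over the nonzero zero-divisors of `R/I`, and any two vertices lying over
distinct cosets whose product lies in `I` are adjacent in `Γ_I(R)`. -/
theorem stmt_4 (R : Type*) [CommRing R] (I : Ideal R) :
    zdvSet R I = {x : R | Ideal.Quotient.mk I x ∈ zdSet (R ⧸ I)} ∧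
    (∀ x y : zdvSet R I,
      Ideal.Quotient.mk I (x : R) ≠ Ideal.Quotient.mk I (y : R) →
      (x : R) * y ∈ I → (GammaI R I).Adj x y) :=
  ⟨zdvSet_eq_preimage_zdSet_quotient I, fun _ _ => GammaI_adj_of_mk_ne⟩
end

section
/- Let (R, m) be a finite commutative local ring with m² ≠ 0 and |R/m| ≥ 3. Then the zero-divisor graph Γ(R) contains K_{2,3} as a subgraph; more precisely, if k is the least integer with m^k = 0, then |m^{k-1} − {0}| ≥ 2 and |m^{k-2} − m^{k-1}| ≥ 6, and every element of m^{k-1} − {0} annihilates every element of m^{k-2} − m^{k-1}. -/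
/-!
Pick a unit `c` of `R` such that `c - 1` is a unit too; it exists because the residue field has
an element other than `0` and `1`. For any ideal `J` and `y ∉ J`, the elements `0, y, c y` then
lie in pairwise distinct cosets of `J`, their differences being unit multiples of `y`.

Put `J = m^{k-1}` and `I = m^{k-2}`, so that `J < I` and `J ≠ 0`. A nonzero `x ∈ J` gives the
nonzero elements `x, c x` of `J`, and `y ∈ I \ J` gives the six elements `{y, c y} + {0, x, c x}`
of `I \ J`. As `k ≥ 3`, `J I ⊆ m^{2k-3} ⊆ m^k = 0`, so `J \ {0}` and `I \ J` are the two sides of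
a complete bipartite subgraph of `Γ(R)`.
-/

open SimpleGraph Function

/-- The zero-divisor graph of a commutative ring, defined on the whole ring
(elements that are not nonzero zero-divisors are isolated vertices). -/
def zdg (R : Type*) [CommRing R] : SimpleGraph R where
  Adj x y := x ≠ y ∧ x ≠ 0 ∧ y ≠ 0 ∧ x * y = 0
  symm := by
    constructor
    rintro x y ⟨h1, h2, h3, h4⟩
    exact ⟨fun e => h1 e.symm, h3, h2, by rwa [mul_comm]⟩
  loopless := by constructor; rintro x ⟨h1, _⟩; exact h1 rfl

open IsLocalRing

theorem IsLocalRing.exists_isUnit_and_isUnit_sub_one {R : Type*} [CommRing R] [IsLocalRing R]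
    (hcard : 3 ≤ Nat.card (R ⧸ maximalIdeal R)) : ∃ c : R, IsUnit c ∧ IsUnit (c - 1) := by
  obtain ⟨z, -, hz⟩ := Set.exists_mem_notMem_of_ncard_lt_ncard
    (s := ({0, 1} : Set (R ⧸ maximalIdeal R))) (t := Set.univ)
    (by rw [Set.ncard_pair zero_ne_one, Set.ncard_univ]; omega)
  obtain ⟨c, rfl⟩ := Ideal.Quotient.mk_surjective z
  simp only [Set.mem_insert_iff, Set.mem_singleton_iff, not_or] at hz
  refine ⟨c, (residue_ne_zero_iff_isUnit c).mp hz.1, (residue_ne_zero_iff_isUnit _).mp ?_⟩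
  rw [map_sub, map_one, sub_ne_zero]
  exact hz.2

section Cosets

variable {G S : Type*} [AddCommGroup G] [SetLike S G] [AddSubgroupClass S G] {J : S}

theorem injective_of_pairwise_sub_notMem {ι : Type*} {a : ι → G}
    (ha : Pairwise fun i i' => a i - a i' ∉ J) : Injective a := fun i i' h =>
  by_contra fun hne => ha hne (by rw [h, sub_self]; exact zero_mem J)

theorem injective_add_of_pairwise_sub_notMem {ι κ : Type*} {a : ι → G} {b : κ → G}
    (ha : Pairwise fun i i' => a i - a i' ∉ J) (hb : Injective b) (hbJ : ∀ j, b j ∈ J) :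
    Injective fun p : ι × κ => a p.1 + b p.2 := by
  rintro ⟨i, j⟩ ⟨i', j'⟩ (h : a i + b j = a i' + b j')
  have hii' : i = i' := by
    by_contra hne
    refine ha hne ?_
    rw [sub_eq_sub_iff_add_eq_add.mpr (by rw [h, add_comm])]
    exact sub_mem (hbJ j') (hbJ j)
  subst hii'
  rw [hb (add_left_cancel h)]

end Cosets

section ExceptionalUnit

variable {R : Type*} [CommRing R] {c : R}

theorem pairwise_vecCons_zero_self_mul_sub_notMem (hc : IsUnit c) (hc1 : IsUnit (c - 1)) {J : Ideal R} {y : R}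
    (hy : y ∉ J) : Pairwise fun i j : Fin 3 => ![0, y, c * y] i - ![0, y, c * y] j ∉ J := by
  have hu : ∀ u : R, IsUnit u → u * y ∉ J := fun u hu => (J.unit_mul_mem_iff_mem hu).not.mpr hy
  intro i j hij
  fin_cases i <;> fin_cases j <;>
    simp only [Fin.zero_eta, Fin.mk_one, Fin.reduceFinMk, Fin.isValue, ne_eq, not_true_eq_false,
      Matrix.cons_val_zero, Matrix.cons_val_one, Matrix.cons_val, zero_sub, sub_zero, neg_mem_iff]
      at hij ⊢
  · exact hy
  · exact hu c hc
  · exact hy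
  · rw [← neg_sub, neg_mem_iff, show c * y - y = (c - 1) * y by ring]
    exact hu _ hc1
  · exact hu c hc
  · rw [show c * y - y = (c - 1) * y by ring]
    exact hu _ hc1

theorem vecCons_zero_self_mul_mem {J : Ideal R} {x : R} (hx : x ∈ J) (j : Fin 3) :
    ![0, x, c * x] j ∈ J := by
  fin_cases j
  · exact J.zero_mem
  · exact hx
  · exact J.mul_mem_left c hx

theorem injective_vecCons_zero_self_mul (hc : IsUnit c) (hc1 : IsUnit (c - 1)) {x : R}
    (hx : x ≠ 0) : Injective ![0, x, c * x] :=
  injective_of_pairwise_sub_notMem (pairwise_vecCons_zero_self_mul_sub_notMem hc hc1 (J := ⊥) hx)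

end ExceptionalUnit

section Nilpotent

variable {R : Type*} [CommSemiring R] {I : Ideal R}

theorem Ideal.pow_succ_lt_pow_of_ne {n : ℕ} (h : I ^ (n + 2) ≠ I ^ (n + 1)) :
    I ^ (n + 1) < I ^ n := by
  refine lt_of_le_of_ne (Ideal.pow_le_pow_right n.le_succ) fun heq => h ?_
  rw [pow_succ, heq, ← pow_succ, heq]

theorem Ideal.mul_eq_zero_of_mem_pow {k a b : ℕ} (hk : I ^ k = ⊥) (hab : k ≤ a + b) {u v : R}
    (hu : u ∈ I ^ a) (hv : v ∈ I ^ b) : u * v = 0 := by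
  have huv : u * v ∈ I ^ k := Ideal.pow_le_pow_right hab (pow_add I a b ▸ Ideal.mul_mem_mul hu hv)
  rwa [hk, Ideal.mem_bot] at huv

end Nilpotent

theorem le_natCard_setOf {R α : Type*} [Finite R] {p : R → Prop} {f : α → R} (hf : Injective f)
    (hp : ∀ a, p (f a)) : Nat.card α ≤ Nat.card {z | p z} :=
  Nat.card_le_card_of_injective (fun a => ⟨f a, hp a⟩) fun _ _ h => hf (congrArg Subtype.val h)

section Counting

variable {R : Type*} [CommRing R] [Finite R] {c : R} {I J : Ideal R}

theorem two_le_natCard_mem_ne_zero (hc : IsUnit c) (hc1 : IsUnit (c - 1)) (hJ : J ≠ ⊥) : 2 ≤ Nat.card {z : R | z ∈ J ∧ z ≠ 0} := by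
  obtain ⟨x, hx, hx0⟩ := Submodule.exists_mem_ne_zero_of_ne_bot hJ
  have hinj := injective_vecCons_zero_self_mul hc hc1 hx0
  simpa using le_natCard_setOf (hinj.comp (Fin.succ_injective 2)) fun i =>
    ⟨vecCons_zero_self_mul_mem hx i.succ, fun h => Fin.succ_ne_zero i (hinj (h.trans rfl))⟩

theorem six_le_natCard_mem_notMem (hc : IsUnit c) (hc1 : IsUnit (c - 1)) (hJ : J ≠ ⊥)
    (hJI : J < I) :
    6 ≤ Nat.card {z : R | z ∈ I ∧ z ∉ J} := by
  obtain ⟨x, hx, hx0⟩ := Submodule.exists_mem_ne_zero_of_ne_bot hJ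
  obtain ⟨y, hyI, hyJ⟩ := SetLike.exists_of_lt hJI
  have hxJ := vecCons_zero_self_mul_mem (c := c) hx
  have hyc : Pairwise fun i i' : Fin 2 => ![0, y, c * y] i.succ - ![0, y, c * y] i'.succ ∉ J :=
    (pairwise_vecCons_zero_self_mul_sub_notMem hc hc1 hyJ).comp_of_injective (Fin.succ_injective 2)
  simpa using le_natCard_setOf (injective_add_of_pairwise_sub_notMem hyc
    (injective_vecCons_zero_self_mul hc hc1 hx0) hxJ) fun ⟨i, j⟩ => by
    have hyiJ : ![0, y, c * y] i.succ ∉ J := by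
      simpa using pairwise_vecCons_zero_self_mul_sub_notMem hc hc1 hyJ (Fin.succ_ne_zero i)
    exact ⟨I.add_mem (vecCons_zero_self_mul_mem hyI i.succ) (hJI.le (hxJ j)),
      (J.add_mem_iff_left (hxJ j)).not.mpr hyiJ⟩

end Counting

theorem exists_injective_completeBipartiteGraph_hom_zdg {R α β : Type*} [CommRing R]
    {A B : Set R} (hA : 0 ∉ A) (hB : 0 ∉ B) (hAB : Disjoint A B)
    (hmul : ∀ u ∈ A, ∀ v ∈ B, u * v = 0) (f : α ↪ A) (g : β ↪ B) :
    ∃ φ : completeBipartiteGraph α β →g zdg R, Injective φ := by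
  have hfg : ∀ i j, (f i : R) ≠ g j := fun i j => hAB.ne_of_mem (f i).2 (g j).2
  have hadj : ∀ i j, (zdg R).Adj (f i) (g j) := fun i j =>
    ⟨hfg i j, fun h => hA (h ▸ (f i).2), fun h => hB (h ▸ (g j).2), hmul _ (f i).2 _ (g j).2⟩
  refine ⟨⟨Sum.elim (fun i => f i) (fun j => g j), ?_⟩,
    (Subtype.val_injective.comp f.injective).sumElim (Subtype.val_injective.comp g.injective) hfg⟩
  rintro (i | j) (i' | j') h <;>
    simp only [completeBipartiteGraph_adj, Sum.isLeft_inl, Sum.isLeft_inr, Sum.isRight_inl,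
      Sum.isRight_inr, Bool.false_eq_true, and_false, false_and, or_false, false_or] at h
  · exact hadj i j'
  · exact (hadj i' j).symm

/-- Let `(R, m)` be a finite local ring with `m² ≠ 0` and `|R/m| ≥ 3`, and let `k` be the
least integer with `m^k = 0`. Then `|m^{k-1} − {0}| ≥ 2`, `|m^{k-2} − m^{k-1}| ≥ 6`, every
element of `m^{k-1} − {0}` annihilates every element of `m^{k-2} − m^{k-1}`, and `K_{2,3}`
is a subgraph of `Γ(R)`. -/
theorem stmt_7 (R : Type*) [CommRing R] [IsLocalRing R] [Finite R]
    (hm2 : (IsLocalRing.maximalIdeal R) ^ 2 ≠ ⊥)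
    (hcard : 3 ≤ Nat.card (R ⧸ IsLocalRing.maximalIdeal R))
    (k : ℕ) (hk : (IsLocalRing.maximalIdeal R) ^ k = ⊥)
    (hkleast : ∀ j < k, (IsLocalRing.maximalIdeal R) ^ j ≠ ⊥) :
    2 ≤ Nat.card {x : R | x ∈ (IsLocalRing.maximalIdeal R) ^ (k - 1) ∧ x ≠ 0} ∧
    6 ≤ Nat.card {x : R | x ∈ (IsLocalRing.maximalIdeal R) ^ (k - 2) ∧
          x ∉ (IsLocalRing.maximalIdeal R) ^ (k - 1)} ∧
    (∀ u ∈ (IsLocalRing.maximalIdeal R) ^ (k - 1), u ≠ 0 →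
      ∀ v ∈ (IsLocalRing.maximalIdeal R) ^ (k - 2),
        v ∉ (IsLocalRing.maximalIdeal R) ^ (k - 1) → u * v = 0) ∧
    ∃ f : completeBipartiteGraph (Fin 2) (Fin 3) →g zdg R, Injective f := by
  set M := maximalIdeal R
  obtain ⟨c, hc, hc1⟩ := exists_isUnit_and_isUnit_sub_one hcard
  have hk3 : 3 ≤ k := by
    by_contra! h
    exact hm2 (le_bot_iff.mp (hk ▸ Ideal.pow_le_pow_right (by omega)))
  obtain ⟨n, rfl⟩ : ∃ n, k = n + 3 := ⟨k - 3, by omega⟩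
  rw [show n + 3 - 1 = n + 2 by omega, show n + 3 - 2 = n + 1 by omega]
  have hJ : M ^ (n + 2) ≠ ⊥ := hkleast _ (by omega)
  have hJI : M ^ (n + 2) < M ^ (n + 1) := Ideal.pow_succ_lt_pow_of_ne (hk ▸ hJ.symm)
  have hann : ∀ u ∈ M ^ (n + 2), ∀ v ∈ M ^ (n + 1), u * v = 0 := fun u hu v hv =>
    Ideal.mul_eq_zero_of_mem_pow hk (by omega) hu hv
  have hA := two_le_natCard_mem_ne_zero hc hc1 hJ
  have hB := six_le_natCard_mem_notMem hc hc1 hJ hJI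
  refine ⟨hA, hB, fun u hu _ v hv _ => hann u hu v hv, ?_⟩
  exact exists_injective_completeBipartiteGraph_hom_zdg
    (A := {z | z ∈ M ^ (n + 2) ∧ z ≠ 0}) (B := {z | z ∈ M ^ (n + 1) ∧ z ∉ M ^ (n + 2)})
    (by simp) (by simp)
    (Set.disjoint_left.mpr fun z hz hz' => hz'.2 hz.1) (fun u hu v hv => hann u hu.1 v hv.1)
    ((Fin.castLEEmb hA).trans (Finite.equivFin _).symm.toEmbedding)
    ((Fin.castLEEmb (by omega)).trans (Finite.equivFin _).symm.toEmbedding)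
end

section
/- Let R = ℤ/2 × S where S is a finite commutative local ring whose zero-divisor graph has at least 3 vertices. Then Γ(R) contains both a triangle K_3 and the complete bipartite graph K_{2,3} as subgraphs: there exist three distinct nonzero zero-divisors a, b, c ∈ S with ab = ac = 0, and then u_1 = (0,b), u_2 = (0,c), v_1 = (1,0), v_2 = (0,a), v_3 = (1,a) form the required configuration. -/
open SimpleGraph Function

/-! A finite local ring `S` is Artinian, so its maximal ideal `m` is an associated prime:
`m = Ann(a)` for some `a ≠ 0`. Every zero-divisor lies in `m`, hence is killed by `a`, and
among at least three nonzero zero-divisors two, `b` and `c`, differ from `a`. In `ℤ/2 × S`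
the vertices `(0,b), (0,c)` are then adjacent to each of `(1,0), (0,a), (1,a)`, and
`(0,b), (1,0), (0,a)` form a triangle. -/

theorem IsLocalRing.exists_ne_zero_forall_mem_maximalIdeal_mul_eq_zero
    (R : Type*) [CommRing R] [IsLocalRing R] [IsArtinianRing R] :
    ∃ a : R, a ≠ 0 ∧ ∀ x ∈ maximalIdeal R, a * x = 0 := by
  obtain ⟨p, hp⟩ := associatedPrimes.nonempty R R
  obtain ⟨hprime, a, rfl⟩ := isAssociatedPrime_iff.mp hp
  have hmax : Submodule.colon (⊥ : Ideal R) {a} = maximalIdeal R := eq_maximalIdeal inferInstance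
  refine ⟨a, ?_, fun x hx => ?_⟩
  · rintro rfl
    exact hprime.ne_top (by ext; simp [Submodule.mem_colon_singleton])
  · rw [← hmax, Submodule.mem_colon_singleton] at hx
    simpa [mul_comm] using hx

theorem IsLocalRing.mem_maximalIdeal_of_exists_mul_eq_zero {R : Type*} [CommRing R]
    [IsLocalRing R] {x : R} (h : ∃ y, y ≠ 0 ∧ x * y = 0) : x ∈ maximalIdeal R := by
  obtain ⟨y, hy, hxy⟩ := h
  exact fun hx => hy (hx.mul_right_eq_zero.mp hxy)

theorem Set.exists_ne_ne_ne_of_two_lt_ncard {α : Type*} {s : Set α} (hs : 2 < s.ncard) (a : α) :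
    ∃ b ∈ s, ∃ c ∈ s, b ≠ c ∧ b ≠ a ∧ c ≠ a := by
  have hfin : s.Finite := Set.finite_of_ncard_pos (by omega)
  have : 1 < (s \ {a}).ncard := by
    have := Set.pred_ncard_le_ncard_sdiff_singleton s a; omega
  obtain ⟨b, c, ⟨hb, hba⟩, ⟨hc, hca⟩, hbc⟩ := (Set.one_lt_ncard_iff hfin.sdiff).mp this
  exact ⟨b, hb, c, hc, hbc, hba, hca⟩

theorem SimpleGraph.exists_injective_hom_completeGraph_fin_three {V : Type*} {G : SimpleGraph V}
    [DecidableEq V] {x y z : V} (hxy : G.Adj x y) (hxz : G.Adj x z) (hyz : G.Adj y z) :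
    ∃ f : completeGraph (Fin 3) →g G, Injective f := by
  obtain ⟨f⟩ := (not_cliqueFree_iff_top_isContained 3).mp
    (is3Clique_triple_iff.mpr ⟨hxy, hxz, hyz⟩).not_cliqueFree
  exact ⟨f.toHom, f.injective⟩

theorem SimpleGraph.exists_injective_hom_completeBipartiteGraph {V α β : Type*} [Fintype α]
    [Fintype β] {G : SimpleGraph V} (left right : Finset V) (card_left : left.card = Fintype.card α)
    (card_right : right.card = Fintype.card β) (h : G.IsCompleteBetween left right) :
    ∃ g : completeBipartiteGraph α β →g G, Injective g :=
  let g := Copy.completeBipartiteGraph left right card_left card_right h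
  ⟨g.toHom, g.injective⟩

section ProdZeroDivisorGraph

variable {R S : Type*} [CommRing R] [Nontrivial R] [CommRing S]

theorem zdg_prod_adj_one_zero {a : S} (ha : a ≠ 0) : (zdg (R × S)).Adj (1, 0) (0, a) := by
  simp [zdg, Prod.ext_iff, ha]

theorem zdg_prod_adj_zero_mk {a b : S} (ha : a ≠ 0) (hb : b ≠ 0) (hab : a ≠ b) (h : a * b = 0) :
    ∀ v ∈ ({(1, 0), (0, a), (1, a)} : Set (R × S)), (zdg (R × S)).Adj (0, b) v := by
  rintro v (rfl | rfl | rfl) <;> simp [zdg, Prod.ext_iff, ha, hb, hab.symm, mul_comm b a, h]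

end ProdZeroDivisorGraph

/-- If `R = ℤ/2 × S` where `S` is a finite local ring with at least `3` nonzero
zero-divisors, then there are three distinct nonzero zero-divisors `a, b, c ∈ S` with
`ab = ac = 0`; the vertices `u₁ = (0,b)`, `u₂ = (0,c)`, `v₁ = (1,0)`, `v₂ = (0,a)`,
`v₃ = (1,a)` give a `K_{2,3}` in `Γ(ℤ/2 × S)`, and `Γ(ℤ/2 × S)` also contains a
triangle `K₃`. -/
theorem stmt_9 (S : Type*) [CommRing S] [IsLocalRing S] [Finite S]
    (h3 : 3 ≤ Nat.card {x : S | x ≠ 0 ∧ ∃ y, y ≠ 0 ∧ x * y = 0}) :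
    (∃ a b c : S,
      a ≠ b ∧ a ≠ c ∧ b ≠ c ∧
      a ≠ 0 ∧ b ≠ 0 ∧ c ≠ 0 ∧
      (∃ y, y ≠ 0 ∧ a * y = 0) ∧ (∃ y, y ≠ 0 ∧ b * y = 0) ∧
      (∃ y, y ≠ 0 ∧ c * y = 0) ∧
      a * b = 0 ∧ a * c = 0 ∧
      (∀ u ∈ ({((0 : ZMod 2), b), ((0 : ZMod 2), c)} : Set (ZMod 2 × S)),
        ∀ v ∈ ({((1 : ZMod 2), (0 : S)), ((0 : ZMod 2), a), ((1 : ZMod 2), a)} :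
            Set (ZMod 2 × S)),
          (zdg (ZMod 2 × S)).Adj u v)) ∧
    (∃ f : completeGraph (Fin 3) →g zdg (ZMod 2 × S), Injective f) ∧
    (∃ g : completeBipartiteGraph (Fin 2) (Fin 3) →g zdg (ZMod 2 × S), Injective g) := by
  classical
  obtain ⟨a, ha0, hann⟩ := IsLocalRing.exists_ne_zero_forall_mem_maximalIdeal_mul_eq_zero S
  obtain ⟨b, ⟨hb0, hbzd⟩, c, ⟨hc0, hczd⟩, hbc, hba, hca⟩ :=
    Set.exists_ne_ne_ne_of_two_lt_ncard (by rwa [← Nat.card_coe_set_eq]) a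
  have hab : a * b = 0 := hann b (IsLocalRing.mem_maximalIdeal_of_exists_mul_eq_zero hbzd)
  have hac : a * c = 0 := hann c (IsLocalRing.mem_maximalIdeal_of_exists_mul_eq_zero hczd)
  have hK23 : (zdg (ZMod 2 × S)).IsCompleteBetween {(0, b), (0, c)} {(1, 0), (0, a), (1, a)} := by
    rintro u (rfl | rfl)
    exacts [zdg_prod_adj_zero_mk ha0 hb0 hba.symm hab, zdg_prod_adj_zero_mk ha0 hc0 hca.symm hac]
  refine ⟨⟨a, b, c, hba.symm, hca.symm, hbc, ha0, hb0, hc0, ⟨b, hb0, hab⟩, hbzd, hczd, hab, hac,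
    hK23⟩, ?_, ?_⟩
  · have hbx := zdg_prod_adj_zero_mk (R := ZMod 2) ha0 hb0 hba.symm hab
    exact exists_injective_hom_completeGraph_fin_three (hbx _ (by simp)) (hbx _ (by simp))
      (zdg_prod_adj_one_zero ha0)
  · refine exists_injective_hom_completeBipartiteGraph {(0, b), (0, c)} {(1, 0), (0, a), (1, a)}
      ?_ ?_ (by simpa only [Finset.coe_insert, Finset.coe_singleton] using hK23)
    · simp [hbc]
    · simp [Finset.card_insert_of_notMem, Prod.ext_iff, ha0.symm]
end
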